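/- arXiv:1410.1052 — 4 statements merged into one kernel-verified Lean document; each statement's English description precedes it below -/
import Mathlib

section
/- Suppose that for all analytic A ⊆ X and all f : A → Y, the condition f⁻¹Σ⁰_2 ⊆ Σ⁰_n implies that f is decomposable into countably many Σ⁰_{n-1}-measurable functions on Δ⁰_n pieces. Suppose also that for all 3 ≤ m ≤ n, every Σ⁰_{n-1}-measurable function g : B → Y on an analytic set B with g⁻¹Σ⁰_m ⊆ Σ⁰_n lies in dec(Σ⁰_{n-m+1}, Δ⁰_n). Then for all 2 ≤ m ≤ n and all f : A → Y with f⁻¹Σ⁰_m ⊆ Σ⁰_n, f ∈ dec(Σ⁰_{n-m+1}, Δ⁰_n). -/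
/-- The finite additive levels of the Borel hierarchy: `Sigma0 X 1` is the class
of open sets, `Sigma0 X (n+1)` the class of countable unions of complements of
`Sigma0 X n` sets; at level `0` we take the clopen (`Δ⁰₁`) sets. -/
def Sigma0 (X : Type*) [TopologicalSpace X] : ℕ → Set (Set X)
  | 0 => {S | IsOpen S ∧ IsClosed S}
  | 1 => {S | IsOpen S}
  | (n + 2) => {S | ∃ A : ℕ → Set X, (∀ i, A i ∈ Sigma0 X (n + 1)) ∧ S = ⋃ i, (A i)ᶜ}

/-- The finite multiplicative levels of the Borel hierarchy. -/
def Pi0 (X : Type*) [TopologicalSpace X] (n : ℕ) : Set (Set X) :=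
  {S | Sᶜ ∈ Sigma0 X n}

variable {X Y : Type*}

/-- `f` satisfies `f⁻¹Σ⁰_m ⊆ Σ⁰_n` on `A`: preimages of `Σ⁰_m` subsets of `Y` are
`Σ⁰_n` subsets of `A` (i.e. traces on `A` of `Σ⁰_n` subsets of `X`). -/
def PreimageCond [TopologicalSpace X] [TopologicalSpace Y]
    (f : X → Y) (A : Set X) (m n : ℕ) : Prop :=
  ∀ S ∈ Sigma0 Y m, ∃ T ∈ Sigma0 X n, A ∩ f ⁻¹' S = T ∩ A

/-- The restriction of `f` to `B` is `Σ⁰_k`-measurable (in the trace sense). -/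
def MeasOn [TopologicalSpace X] [TopologicalSpace Y]
    (f : X → Y) (B : Set X) (k : ℕ) : Prop :=
  ∀ U : Set Y, IsOpen U → ∃ T ∈ Sigma0 X k, B ∩ f ⁻¹' U = T ∩ B

/-- `f ∈ dec(Σ⁰_k, Δ⁰_n)` on `A`: there is a countable cover of `A` by `Π⁰_{n-1}`
sets on each of which `f` restricts to a `Σ⁰_k`-measurable function. -/
def Dec [TopologicalSpace X] [TopologicalSpace Y]
    (f : X → Y) (A : Set X) (k n : ℕ) : Prop :=
  ∃ C : ℕ → Set X, (∀ i, C i ∈ Pi0 X (n - 1)) ∧ A ⊆ ⋃ i, C i ∧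
    ∀ i, MeasOn f (A ∩ C i) k

section Aux

variable [TopologicalSpace X]

/-- `Σ⁰_n` is closed under binary unions. -/
lemma sigma0_union {n : ℕ} {S T : Set X} (hS : S ∈ Sigma0 X n) (hT : T ∈ Sigma0 X n) :
    S ∪ T ∈ Sigma0 X n := by
  match n with
  | 0 => exact ⟨hS.1.union hT.1, hS.2.union hT.2⟩
  | 1 => exact hS.union hT
  | (k+2) =>
    obtain ⟨A, hA, rfl⟩ := hS
    obtain ⟨B, hB, rfl⟩ := hT
    refine ⟨fun i => if Even i then A (i / 2) else B (i / 2), fun i => by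
      by_cases h : Even i <;> simp [h, hA, hB], ?_⟩
    ext x
    simp only [Set.mem_union, Set.mem_iUnion]
    constructor
    · rintro (⟨i, hi⟩ | ⟨i, hi⟩)
      · exact ⟨2 * i, by simpa [Nat.mul_div_cancel_left] using hi⟩
      · refine ⟨2 * i + 1, ?_⟩
        have : ¬ Even (2 * i + 1) := by simp [Nat.even_add_one]
        simpa [this, Nat.mul_add_div, Nat.mul_div_cancel_left] using hi
    · rintro ⟨i, hi⟩
      by_cases h : Even i
      · exact Or.inl ⟨i / 2, by simpa [h] using hi⟩
      · exact Or.inr ⟨i / 2, by simpa [h] using hi⟩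

/-- In a Polish space, every open set is `Σ⁰_2` (it is `Fσ`). -/
lemma open_mem_sigma0_two [PolishSpace X] {S : Set X} (hS : IsOpen S) : S ∈ Sigma0 X 2 := by
  letI := TopologicalSpace.metrizableSpaceMetric X
  obtain ⟨f, hfo, hfe⟩ := (isClosed_compl_iff.2 hS).isGδ.eq_iInter_nat
  exact ⟨f, fun i => hfo i, by rw [← Set.compl_iInter, ← hfe, compl_compl]⟩

lemma sigma0_succ [PolishSpace X] : ∀ k : ℕ, Sigma0 X k ⊆ Sigma0 X (k+1) := by
  intro k
  induction k with
  | zero => exact fun S hS => hS.1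
  | succ j ih =>
    match j, ih with
    | 0, _ => exact fun S hS => open_mem_sigma0_two hS
    | (i+1), ih =>
      rintro S ⟨A, hA, rfl⟩
      exact ⟨A, fun k => ih (hA k), rfl⟩

/-- The hierarchy is monotone in a Polish space. -/
lemma sigma0_mono [PolishSpace X] {m k : ℕ} (h : m ≤ k) : Sigma0 X m ⊆ Sigma0 X k := by
  induction h with
  | refl => exact fun S hS => hS
  | step _ ih => exact fun S hS => sigma0_succ _ (ih hS)

/-- `Σ⁰_n` sets are Borel. -/
lemma sigma0_measurable [MeasurableSpace X] [BorelSpace X] :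
    ∀ (n : ℕ) (S : Set X), S ∈ Sigma0 X n → MeasurableSet S := by
  intro n
  induction n with
  | zero => exact fun S hS => hS.1.measurableSet
  | succ j ih =>
    match j, ih with
    | 0, _ => exact fun S hS => hS.measurableSet
    | (i+1), ih =>
      rintro S ⟨A, hA, rfl⟩
      exact MeasurableSet.iUnion fun k => (ih _ (hA k)).compl

/-- The intersection of an analytic set with a set whose complement is `Σ⁰_k`
is analytic. -/
lemma analytic_inter_pi0 [PolishSpace X] {A C : Set X} {k : ℕ}
    (hA : MeasureTheory.AnalyticSet A) (hC : Cᶜ ∈ Sigma0 X k) :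
    MeasureTheory.AnalyticSet (A ∩ C) := by
  letI := borel X
  haveI : BorelSpace X := ⟨rfl⟩
  have hCm : MeasurableSet C := by
    simpa using (sigma0_measurable k Cᶜ hC).compl
  rw [Set.inter_eq_iInter]
  exact MeasureTheory.AnalyticSet.iInter fun b => by
    cases b <;> simp [hCm.analyticSet, hA]

end Aux

/-- The Decomposability Conjecture reduces to the cases `m = 2`: if the conjecture
holds at `(2, n)` for all functions on analytic subsets of `X`, and moreover every
`Σ⁰_{n-1}`-measurable function on an analytic set satisfying `g⁻¹Σ⁰_m ⊆ Σ⁰_n`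
(for `3 ≤ m ≤ n`) is in `dec(Σ⁰_{n-m+1}, Δ⁰_n)`, then the conjecture holds at
`(m, n)` for all `2 ≤ m ≤ n`. -/
theorem dec_conjecture_reduces_to_m_two
    [TopologicalSpace X] [PolishSpace X] [TopologicalSpace Y] [PolishSpace Y]
    (n : ℕ) (hn : 2 ≤ n) (A : Set X) (hA : MeasureTheory.AnalyticSet A)
    (H1 : ∀ B : Set X, MeasureTheory.AnalyticSet B → ∀ f : X → Y,
      PreimageCond f B 2 n → Dec f B (n - 1) n)
    (H2 : ∀ m : ℕ, 3 ≤ m → m ≤ n → ∀ B : Set X, MeasureTheory.AnalyticSet B →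
      ∀ g : X → Y, MeasOn g B (n - 1) → PreimageCond g B m n →
        Dec g B (n - m + 1) n) :
    ∀ m : ℕ, 2 ≤ m → m ≤ n → ∀ f : X → Y,
      PreimageCond f A m n → Dec f A (n - m + 1) n := by
  intro m hm2 hmn f hf
  have hf2 : PreimageCond f A 2 n := fun S hS => hf S (sigma0_mono hm2 hS)
  rcases eq_or_lt_of_le hm2 with heq | hlt
  · have : n - m + 1 = n - 1 := by omega
    rw [this]
    exact H1 A hA f hf2
  · have hm3 : 3 ≤ m := hlt
    obtain ⟨C, hC, hcov, hmeas⟩ := H1 A hA f hf2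
    have hanal : ∀ i, MeasureTheory.AnalyticSet (A ∩ C i) :=
      fun i => analytic_inter_pi0 hA (hC i)
    have hpc : ∀ i, PreimageCond f (A ∩ C i) m n := by
      intro i S hS
      obtain ⟨T, hT, hTeq⟩ := hf S hS
      refine ⟨T, hT, ?_⟩
      have := Set.ext_iff.1 hTeq
      ext x
      have hx := this x
      simp only [Set.mem_inter_iff, Set.mem_preimage] at hx ⊢
      tauto
    choose D hD hDcov hDmeas using
      fun i => H2 m hm3 hmn (A ∩ C i) (hanal i) f (hmeas i) (hpc i)
    refine ⟨fun k => C (Nat.unpair k).1 ∩ D (Nat.unpair k).1 (Nat.unpair k).2,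
      fun k => ?_, ?_, fun k => ?_⟩
    · have h1 := hC (Nat.unpair k).1
      have h2 := hD (Nat.unpair k).1 (Nat.unpair k).2
      simp only [Pi0, Set.mem_setOf_eq, Set.compl_inter] at h1 h2 ⊢
      exact sigma0_union h1 h2
    · intro x hx
      obtain ⟨i, hi⟩ := Set.mem_iUnion.1 (hcov hx)
      obtain ⟨j, hj⟩ := Set.mem_iUnion.1 (hDcov i ⟨hx, hi⟩)
      exact Set.mem_iUnion.2 ⟨Nat.pair i j, by simp [Nat.unpair_pair, hi, hj]⟩
    · have := hDmeas (Nat.unpair k).1 (Nat.unpair k).2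
      rwa [Set.inter_assoc] at this
end

section
/- For all sets A, B ⊆ ℕ: A is enumeration reducible to B if and only if for every C ⊆ ℕ, whenever B is enumeration reducible to C ⊕ (complement of C), then A is enumeration reducible to C ⊕ (complement of C). -/
/-!
One direction is transitivity of `≤ₑ`. For the other, when `B` is nonempty we build an
enumeration `f` of `B` by finite extensions; with `C` the graph of `f`, `B ≤ₑ C ⊕ Cᶜ`, so
`A ≤ₑ C ⊕ Cᶜ` via some c.e. operator, the `s`-th say. At stage `s` the construction tried to
extend its current initial segment `σ`, inside `B`, so as to force some `k ∉ A` into the output of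
the `s`-th operator. As that operator enumerates `A`, the attempt failed, and so `A` is the set of
`k` that some `B`-valued extension of `σ` forces into it, a set that is `≤ₑ B`.
For empty `B`, `A ≤ₑ ∅ ⊕ ℕ`, a c.e. set, so `A` is c.e.
-/

/-- Enumeration reducibility: `A ≤ₑ B` iff there is a c.e. set `W` of axioms
`(k, d)`, where `d` codes the finite set `{i : testBit d i}`, such that
`k ∈ A` iff some axiom `(k, d) ∈ W` has its finite set included in `B`. -/
def EnumReducible (A B : Set ℕ) : Prop :=
  ∃ W : Set (ℕ × ℕ), REPred (· ∈ W) ∧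
    ∀ k, k ∈ A ↔ ∃ d, (k, d) ∈ W ∧ ∀ i, Nat.testBit d i = true → i ∈ B

/-- The join `A ⊕ B = {2n : n ∈ A} ∪ {2n+1 : n ∈ B}`. -/
def setJoin (A B : Set ℕ) : Set ℕ :=
  {n | (n % 2 = 0 ∧ n / 2 ∈ A) ∨ (n % 2 = 1 ∧ n / 2 ∈ B)}

open Encodable Denumerable
open Nat.Partrec (Code)
open Nat.Partrec.Code

theorem Primrec.nat_pow : Primrec₂ ((· ^ ·) : ℕ → ℕ → ℕ) :=
  Primrec₂.unpaired'.1 Nat.Primrec.pow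

theorem Primrec.nat_testBit : Primrec₂ Nat.testBit := by
  refine ((Primrec.eq.comp (nat_mod.comp (nat_div.comp fst (nat_pow.comp (const 2) snd))
    (const 2)) (const 1)).decide.to₂).of_eq fun d i => ?_
  exact Nat.testBit_eq_decide_div_mod_eq.symm

theorem PrimrecRel.list_mem {α : Type*} [Primcodable α] :
    PrimrecRel fun (a : α) (l : List α) => a ∈ l :=
  (Primrec.eq.exists_mem_list.swap).of_eq fun a l => by simp [Function.swap]

theorem PrimrecRel.list_isPrefix {α : Type*} [Primcodable α] :
    PrimrecRel fun (l₁ l₂ : List α) => l₁ <+: l₂ :=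
  (Primrec.eq.comp₂ Primrec₂.left
    (Primrec.list_take.comp₂ (Primrec.list_length.comp₂ Primrec₂.left) Primrec₂.right)).of_eq
    fun _ _ => List.prefix_iff_eq_take.symm

theorem exists_bound_of_forall_mem {γ : Type*} {P : γ → ℕ → Prop} :
    ∀ l : List γ, (∀ c ∈ l, ∃ n, P c n) → ∃ s, ∀ c ∈ l, ∃ n < s, P c n
  | [], _ => ⟨0, by simp⟩
  | c :: l, h => by
    obtain ⟨n, hn⟩ := h c List.mem_cons_self
    obtain ⟨s, hs⟩ := exists_bound_of_forall_mem l fun c hc => h c (List.mem_cons_of_mem _ hc)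
    refine ⟨max (n + 1) s, ?_⟩
    simp only [List.mem_cons, forall_eq_or_imp]
    exact ⟨⟨n, by omega, hn⟩, fun c hc => (hs c hc).imp fun m hm => ⟨by omega, hm.2⟩⟩

theorem PrimrecPred.rePred {α : Type*} [Primcodable α] {p : α → Prop} (hp : PrimrecPred p) :
    REPred p :=
  hp.computablePred.to_re

namespace REPred

variable {α β : Type*} [Primcodable α] [Primcodable β]

theorem exists_code {p : α → Prop} (hp : REPred p) :
    ∃ c : Code, ∀ a, p a ↔ (eval c (encode a)).Dom := by
  obtain ⟨c, hc⟩ := Nat.Partrec.Code.exists_code.1 hp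
  refine ⟨c, fun a => ?_⟩
  simp [hc, encodek, Part.dom_iff_mem]

theorem of_code (c : Code) : REPred fun a : α => (eval c (encode a)).Dom :=
  (eval_part.comp (Computable.const c) Computable.encode).dom_re

theorem exists_primrecRel {p : α → Prop} (hp : REPred p) :
    ∃ q : α → ℕ → Prop, PrimrecRel q ∧ ∀ a, p a ↔ ∃ n, q a n := by
  obtain ⟨c, hc⟩ := hp.exists_code
  refine ⟨fun a n => (evaln n c (encode a)).isSome, ?_, fun a => ?_⟩
  · exact Primrec.eq.comp (Primrec.option_isSome.comp (primrec_evaln.comp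
      ((Primrec.snd.pair (Primrec.const c)).pair (Primrec.encode.comp Primrec.fst))))
      (Primrec.const true)
  · simp only [hc, Part.dom_iff_mem, evaln_complete, Option.isSome_iff_exists]
    exact exists_comm

theorem of_exists_primrecRel {q : α → ℕ → Prop} (hq : PrimrecRel q) :
    REPred fun a => ∃ n, q a n := by
  classical
  have : Partrec fun a => Nat.rfind fun n => Part.some (decide (q a n)) :=
    Partrec.rfind hq.decide.to_comp.partrec₂
  refine this.dom_re.of_eq fun a => ?_
  simp [Part.dom_iff_mem, Nat.rfind]

theorem comp {p : β → Prop} (hp : REPred p) {f : α → β} (hf : Computable f) :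
    REPred fun a => p (f a) :=
  Partrec.comp hp hf

theorem and {p q : α → Prop} (hp : REPred p) (hq : REPred q) : REPred fun a => p a ∧ q a := by
  obtain ⟨p', hp', hpp'⟩ := hp.exists_primrecRel
  obtain ⟨q', hq', hqq'⟩ := hq.exists_primrecRel
  have hn : Primrec fun x : α × ℕ => x.2.unpair := Primrec.unpair.comp .snd
  refine (of_exists_primrecRel (q := fun a n => p' a n.unpair.1 ∧ q' a n.unpair.2)
    (PrimrecPred.and (hp'.comp .fst (Primrec.fst.comp hn))
      (hq'.comp .fst (Primrec.snd.comp hn)))).of_eq fun a => ?_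
  simp only [hpp', hqq']
  constructor
  · rintro ⟨n, h₁, h₂⟩
    exact ⟨⟨_, h₁⟩, ⟨_, h₂⟩⟩
  · rintro ⟨⟨m, h₁⟩, ⟨n, h₂⟩⟩
    exact ⟨Nat.pair m n, by simpa using h₁, by simpa using h₂⟩

theorem exists_of_prod {p : α → β → Prop} (hp : REPred fun x : α × β => p x.1 x.2) :
    REPred fun a => ∃ b, p a b := by
  obtain ⟨q, hq, hpq⟩ := hp.exists_primrecRel
  have hdec : Primrec fun x : α × ℕ => (decode (α := β) x.2.unpair.1).toList :=
    Primrec.optionToList.comp (Primrec.decode.comp (Primrec.fst.comp (Primrec.unpair.comp .snd)))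
  have hq' : PrimrecRel fun (b : β) (x : α × ℕ) => q (x.1, b) x.2.unpair.2 :=
    hq.comp (Primrec.fst.comp Primrec.snd |>.pair Primrec.fst)
      (Primrec.snd.comp (Primrec.unpair.comp (Primrec.snd.comp Primrec.snd)))
  refine (of_exists_primrecRel (q := fun a n =>
      ∃ b ∈ (decode (α := β) n.unpair.1).toList, q (a, b) n.unpair.2)
    (hq'.exists_mem_list.comp hdec Primrec.id)).of_eq fun a => ?_
  simp only [Option.mem_toList]
  constructor
  · rintro ⟨n, b, -, h⟩
    exact ⟨b, (hpq (a, b)).2 ⟨_, h⟩⟩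
  · rintro ⟨b, hb⟩
    obtain ⟨n, h⟩ := (hpq (a, b)).1 hb
    exact ⟨Nat.pair (encode b) n, b, by simp, by simpa using h⟩

theorem forall_mem {p : α → β → Prop} (hp : REPred fun x : α × β => p x.1 x.2)
    {f : α → List β} (hf : Primrec f) : REPred fun a => ∀ b ∈ f a, p a b := by
  obtain ⟨q, hq, hpq⟩ := hp.exists_primrecRel
  have hq' : PrimrecRel fun (n : ℕ) (x : (α × ℕ) × β) => q (x.1.1, x.2) n :=
    hq.comp ((Primrec.fst.comp (Primrec.fst.comp .snd)).pair (Primrec.snd.comp .snd)) .fst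
  have hbounded : PrimrecRel fun (b : β) (x : α × ℕ) => ∃ n ∈ List.range x.2, q (x.1, b) n :=
    hq'.exists_mem_list.comp (Primrec.list_range.comp (Primrec.snd.comp .snd))
      (Primrec.snd.pair Primrec.fst)
  refine (of_exists_primrecRel (q := fun a s => ∀ b ∈ f a, ∃ n ∈ List.range s, q (a, b) n)
    (hbounded.forall_mem_list.comp (hf.comp .fst) Primrec.id)).of_eq fun a => ?_
  simp only [List.mem_range]
  constructor
  · rintro ⟨s, h⟩ b hb
    obtain ⟨n, -, hn⟩ := h b hb
    exact (hpq (a, b)).2 ⟨n, hn⟩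
  · exact fun h => exists_bound_of_forall_mem _ fun b hb => (hpq (a, b)).1 (h b hb)

end REPred

theorem Nat.testBit_sum_two_pow (s : Finset ℕ) (i : ℕ) :
    (∑ j ∈ s, 2 ^ j).testBit i = true ↔ i ∈ s := by
  rw [← Nat.mem_bitIndices, ← List.mem_toFinset, Finset.toFinset_bitIndices_sum_two_pow]

theorem Nat.lt_of_testBit_eq_true {d i : ℕ} (h : d.testBit i = true) : i < d :=
  Nat.lt_two_pow_self.trans_le (Nat.ge_two_pow_of_testBit h)

theorem primrecRel_forall_testBit_imp_mem :
    PrimrecRel fun (d : ℕ) (l : List ℕ) => ∀ i ∈ List.range d, d.testBit i = true → i ∈ l := by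
  have h : PrimrecRel fun (i : ℕ) (x : ℕ × List ℕ) => x.1.testBit i = false ∨ i ∈ x.2 :=
    PrimrecPred.or (Primrec.eq.comp (Primrec.nat_testBit.comp (Primrec.fst.comp .snd) .fst)
      (Primrec.const false)) (PrimrecRel.list_mem.comp .fst (Primrec.snd.comp .snd))
  refine (h.forall_mem_list.comp (Primrec.list_range.comp .fst) Primrec.id).of_eq fun x => ?_
  simp only [id, ← Bool.not_eq_true, imp_iff_not_or]

theorem enumReducible_iff_exists_list {A B : Set ℕ} :
    EnumReducible A B ↔ ∃ R : ℕ → List ℕ → Prop, REPred (fun x : ℕ × List ℕ => R x.1 x.2) ∧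
      ∀ k, k ∈ A ↔ ∃ l, R k l ∧ ∀ i ∈ l, i ∈ B := by
  constructor
  · rintro ⟨W, hW, hA⟩
    refine ⟨fun k l => ∃ d, (k, d) ∈ W ∧ ∀ i ∈ List.range d, d.testBit i = true → i ∈ l,
      REPred.exists_of_prod (REPred.and (hW.comp ?_) ?_), fun k => ?_⟩
    · exact (Primrec.fst.comp Primrec.fst |>.pair Primrec.snd).to_comp
    · exact primrecRel_forall_testBit_imp_mem.comp .snd (Primrec.snd.comp .fst) |>.rePred
    rw [hA]
    constructor
    · rintro ⟨d, hd, hdB⟩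
      exact ⟨d.bitIndices, ⟨d, hd, fun i _ hbit => Nat.mem_bitIndices.2 hbit⟩,
        fun i hi => hdB i (Nat.mem_bitIndices.1 hi)⟩
    · rintro ⟨l, ⟨d, hd, hdl⟩, hlB⟩
      exact ⟨d, hd, fun i hi => hlB i (hdl i (List.mem_range.2 (Nat.lt_of_testBit_eq_true hi)) hi)⟩
  · rintro ⟨R, hR, hA⟩
    refine ⟨{x | ∃ l, R x.1 l ∧ ∀ i ∈ l, x.2.testBit i = true},
      REPred.exists_of_prod (REPred.and (hR.comp (f := fun y : (ℕ × ℕ) × List ℕ => (y.1.1, y.2))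
        ?_) ?_), fun k => ?_⟩
    · exact (Primrec.fst.comp Primrec.fst |>.pair Primrec.snd).to_comp
    · have h : PrimrecRel fun (i : ℕ) (y : (ℕ × ℕ) × List ℕ) => y.1.2.testBit i = true :=
        Primrec.eq.comp (Primrec.nat_testBit.comp (Primrec.snd.comp (Primrec.fst.comp .snd)) .fst)
          (Primrec.const true)
      exact (h.forall_mem_list.comp .snd .id).rePred
    rw [hA]
    constructor
    · rintro ⟨l, hl, hlB⟩
      exact ⟨∑ i ∈ l.toFinset, 2 ^ i, ⟨l, hl, fun i hi => by simpa [Nat.testBit_sum_two_pow]⟩,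
        fun i hi => hlB i (by simpa [Nat.testBit_sum_two_pow] using hi)⟩
    · rintro ⟨d, ⟨l, hl, hld⟩, hdB⟩
      exact ⟨l, hl, fun i hi => hdB i (hld i hi)⟩

theorem EnumReducible.trans {A B X : Set ℕ} (hAB : EnumReducible A B) (hBX : EnumReducible B X) :
    EnumReducible A X := by
  obtain ⟨R, hR, hA⟩ := enumReducible_iff_exists_list.1 hAB
  obtain ⟨S, hS, hB⟩ := enumReducible_iff_exists_list.1 hBX
  refine enumReducible_iff_exists_list.2
    ⟨fun k l => ∃ l₁, R k l₁ ∧ ∀ x ∈ l₁, ∃ l₂, S x l₂ ∧ ∀ j ∈ l₂, j ∈ l, ?_, fun k => ?_⟩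
  · have hSl : REPred fun y : ((ℕ × List ℕ) × List ℕ) × ℕ =>
        ∃ l₂, S y.2 l₂ ∧ ∀ j ∈ l₂, j ∈ y.1.1.2 := by
      refine REPred.exists_of_prod (REPred.and
        (hS.comp (f := fun z : (((ℕ × List ℕ) × List ℕ) × ℕ) × List ℕ => (z.1.2, z.2)) ?_) ?_)
      · exact (Primrec.snd.comp Primrec.fst |>.pair Primrec.snd).to_comp
      · exact (PrimrecRel.list_mem.forall_mem_list.comp .snd
          (Primrec.snd.comp (Primrec.fst.comp (Primrec.fst.comp .fst)))).rePred
    exact REPred.exists_of_prod (REPred.and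
      (hR.comp (f := fun y : (ℕ × List ℕ) × List ℕ => (y.1.1, y.2))
        (Primrec.fst.comp Primrec.fst |>.pair Primrec.snd).to_comp)
      (REPred.forall_mem hSl Primrec.snd))
  rw [hA]
  constructor
  · rintro ⟨l₁, hl₁, hl₁B⟩
    choose! g hgS hgX using fun x hx => (hB x).1 (hl₁B x hx)
    refine ⟨l₁.flatMap g, ⟨l₁, hl₁, fun x hx => ⟨g x, hgS x hx, fun j hj => ?_⟩⟩, fun j hj => ?_⟩
    · exact List.mem_flatMap.2 ⟨x, hx, hj⟩
    · obtain ⟨x, hx, hj⟩ := List.mem_flatMap.1 hj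
      exact hgX x hx j hj
  · rintro ⟨l, ⟨l₁, hl₁, hl₁l⟩, hlX⟩
    refine ⟨l₁, hl₁, fun x hx => (hB x).2 ?_⟩
    obtain ⟨l₂, hl₂, hl₂l⟩ := hl₁l x hx
    exact ⟨l₂, hl₂, fun j hj => hlX j (hl₂l j hj)⟩

theorem enumReducible_of_rePred {X : Set ℕ} (hX : REPred (· ∈ X)) (Y : Set ℕ) :
    EnumReducible X Y := by
  refine enumReducible_iff_exists_list.2 ⟨fun k l => k ∈ X ∧ l = [],
    REPred.and (hX.comp Computable.fst)
      (Primrec.eq.comp Primrec.snd (Primrec.const [])).rePred, fun k => ?_⟩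
  simp

theorem mem_setJoin_compl {C : Set ℕ} {i : ℕ} : i ∈ setJoin C Cᶜ ↔ (i / 2 ∈ C ↔ i % 2 = 0) := by
  rcases Nat.mod_two_eq_zero_or_one i with h | h <;> simp [setJoin, h]

def natGraph (f : ℕ → ℕ) : Set ℕ := {m | f m.unpair.1 = m.unpair.2}

/-- For every `f` extending `τ`, `i ∈ setJoin (natGraph f) (natGraph f)ᶜ`
(`forces_map_range_iff`). -/
def Forces (τ : List ℕ) (i : ℕ) : Prop :=
  (i / 2).unpair.1 < τ.length ∧ (τ.getD (i / 2).unpair.1 0 = (i / 2).unpair.2 ↔ i % 2 = 0)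

theorem primrecRel_forces : PrimrecRel Forces := by
  have hm : Primrec fun x : List ℕ × ℕ => (x.2 / 2).unpair :=
    Primrec.unpair.comp (Primrec.nat_div.comp .snd (Primrec.const 2))
  have hval : PrimrecPred fun x : List ℕ × ℕ =>
      x.1.getD (x.2 / 2).unpair.1 0 = (x.2 / 2).unpair.2 :=
    Primrec.eq.comp ((Primrec.list_getD 0).comp .fst (Primrec.fst.comp hm)) (Primrec.snd.comp hm)
  have hpar : PrimrecPred fun x : List ℕ × ℕ => x.2 % 2 = 0 :=
    Primrec.eq.comp (Primrec.nat_mod.comp .snd (Primrec.const 2)) (Primrec.const 0)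
  refine PrimrecPred.and (Primrec.nat_lt.comp (Primrec.fst.comp hm) (Primrec.list_length.comp .fst))
    (PrimrecPred.or (hval.and hpar) (hval.not.and hpar.not)) |>.of_eq fun x => ?_
  simp only [Forces]
  tauto

theorem forces_map_range_iff {f : ℕ → ℕ} {n i : ℕ} (hi : (i / 2).unpair.1 < n) :
    Forces ((List.range n).map f) i ↔ i ∈ setJoin (natGraph f) (natGraph f)ᶜ := by
  simp [Forces, mem_setJoin_compl, natGraph, hi]

theorem map_range_prefix (f : ℕ → ℕ) {m n : ℕ} (h : m ≤ n) :
    (List.range m).map f <+: (List.range n).map f := by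
  rw [List.prefix_iff_eq_take, List.length_map, List.length_range, ← List.map_take, List.take_range,
    min_eq_left h]

theorem eq_map_range_of_prefix {f : ℕ → ℕ} {τ : List ℕ} {n : ℕ} (h : τ <+: (List.range n).map f) :
    τ = (List.range τ.length).map f := by
  have hlen : τ.length ≤ n := by simpa using h.length_le
  rwa [List.prefix_iff_eq_take, ← List.map_take, List.take_range, min_eq_left hlen] at h

theorem List.eq_map_range_of_prefix_chain {α : Type*} {σ : ℕ → List α}
    (hσ : ∀ s, σ s <+: σ (s + 1)) (hlen : ∀ s, s ≤ (σ s).length) (d : α) (s : ℕ) :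
    σ s = (List.range (σ s).length).map fun n => (σ (n + 1)).getD n d := by
  have hmono : ∀ s t, s ≤ t → σ s <+: σ t := fun s t hst => by
    induction t, hst using Nat.le_induction with
    | base => exact List.prefix_refl _
    | succ t _ ih => exact ih.trans (hσ t)
  refine List.ext_getElem (by simp) fun n hn _ => ?_
  have hn' : n < (σ (n + 1)).length := hlen (n + 1)
  simp only [List.getElem_map, List.getElem_range, List.getD_eq_getElem _ _ hn']
  rw [(hmono s (max s (n + 1)) (le_max_left _ _)).getElem hn,
    (hmono (n + 1) (max s (n + 1)) (le_max_right _ _)).getElem hn']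

section Construction

variable (B : Set ℕ) (b : ℕ → ℕ) (P : ℕ → List ℕ → Prop)

open Classical in
noncomputable def extensionChain : ℕ → List ℕ
  | 0 => []
  | s + 1 =>
    (if h : ∃ τ, extensionChain s <+: τ ∧ (∀ x ∈ τ, x ∈ B) ∧ P s τ then h.choose
      else extensionChain s) ++ [b s]

theorem exists_extensionChain_succ (s : ℕ) :
    ∃ ρ, extensionChain B b P (s + 1) = ρ ++ [b s] ∧ extensionChain B b P s <+: ρ ∧
      ((∀ x ∈ extensionChain B b P s, x ∈ B) → ∀ x ∈ ρ, x ∈ B) ∧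
      ((∃ τ, extensionChain B b P s <+: τ ∧ (∀ x ∈ τ, x ∈ B) ∧ P s τ) → P s ρ) := by
  by_cases h : ∃ τ, extensionChain B b P s <+: τ ∧ (∀ x ∈ τ, x ∈ B) ∧ P s τ
  · obtain ⟨hpre, hB, hP⟩ := h.choose_spec
    exact ⟨h.choose, by rw [extensionChain, dif_pos h], hpre, fun _ => hB, fun _ => hP⟩
  · exact ⟨_, by rw [extensionChain, dif_neg h], List.prefix_refl _, id, fun h' => (h h').elim⟩

variable {B b} in
theorem mem_of_mem_extensionChain (hb : ∀ s, b s ∈ B) (s : ℕ) :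
    ∀ x ∈ extensionChain B b P s, x ∈ B := by
  induction s with
  | zero => simp [extensionChain]
  | succ s ih =>
    obtain ⟨ρ, heq, -, hρB, -⟩ := exists_extensionChain_succ B b P s
    simp only [heq, List.mem_append, List.mem_singleton]
    rintro x (hx | rfl)
    exacts [hρB ih x hx, hb s]

theorem le_length_extensionChain (s : ℕ) : s ≤ (extensionChain B b P s).length := by
  induction s with
  | zero => simp
  | succ s ih =>
    obtain ⟨ρ, heq, hpre, -⟩ := exists_extensionChain_succ B b P s
    have := hpre.length_le
    simp only [heq, List.length_append, List.length_singleton]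
    omega

theorem extensionChain_prefix_succ (s : ℕ) :
    extensionChain B b P s <+: extensionChain B b P (s + 1) := by
  obtain ⟨ρ, heq, hpre, -⟩ := exists_extensionChain_succ B b P s
  exact heq ▸ hpre.trans (List.prefix_append _ _)

noncomputable def extensionLimit (n : ℕ) : ℕ := (extensionChain B b P (n + 1)).getD n 0

theorem extensionChain_eq_map_range (s : ℕ) :
    extensionChain B b P s =
      (List.range (extensionChain B b P s).length).map (extensionLimit B b P) :=
  List.eq_map_range_of_prefix_chain (extensionChain_prefix_succ B b P)
    (le_length_extensionChain B b P) 0 s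

variable {B b} in
theorem exists_generic_enumeration (hb : ∀ s, b s ∈ B) :
    ∃ f : ℕ → ℕ, (∀ n, f n ∈ B) ∧ (∀ s, ∃ n, f n = b s) ∧
      ∀ s, (∃ n, P s ((List.range n).map f)) ∨
        ∃ n, ∀ τ, (List.range n).map f <+: τ → (∀ x ∈ τ, x ∈ B) → ¬ P s τ := by
  have hchain := extensionChain_eq_map_range B b P
  refine ⟨extensionLimit B b P, fun n => ?_, fun s => ?_, fun s => ?_⟩
  · refine mem_of_mem_extensionChain P hb (n + 1) _ ?_
    rw [hchain]
    exact List.mem_map_of_mem (List.mem_range.2 (le_length_extensionChain B b P (n + 1)))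
  · obtain ⟨ρ, heq, -⟩ := exists_extensionChain_succ B b P s
    have hbs : b s ∈ extensionChain B b P (s + 1) := by simp [heq]
    rw [hchain] at hbs
    obtain ⟨n, -, hn⟩ := List.mem_map.1 hbs
    exact ⟨n, hn⟩
  · by_cases h : ∃ τ, extensionChain B b P s <+: τ ∧ (∀ x ∈ τ, x ∈ B) ∧ P s τ
    · obtain ⟨ρ, heq, -, -, hρ⟩ := exists_extensionChain_succ B b P s
      have hρf : ρ <+: (List.range (extensionChain B b P (s + 1)).length).map
          (extensionLimit B b P) := by
        rw [← hchain, heq]; exact List.prefix_append _ _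
      exact Or.inl ⟨ρ.length, eq_map_range_of_prefix hρf ▸ hρ h⟩
    · exact Or.inr ⟨_, fun τ hτ hτB hP => h ⟨τ, hchain s ▸ hτ, hτB, hP⟩⟩

end Construction

theorem enumReducible_setJoin_natGraph {B : Set ℕ} {f : ℕ → ℕ} (hf : Set.range f = B) :
    EnumReducible B (setJoin (natGraph f) (natGraph f)ᶜ) := by
  refine enumReducible_iff_exists_list.2 ⟨fun k l => ∃ n, l = [2 * Nat.pair n k],
    REPred.exists_of_prod (PrimrecPred.rePred ?_), fun k => ?_⟩
  · exact Primrec.eq.comp (Primrec.snd.comp .fst) (Primrec.list_cons.comp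
      (Primrec.nat_double.comp (Primrec₂.natPair.comp .snd (Primrec.fst.comp .fst)))
      (Primrec.const []))
  · simp [← hf, mem_setJoin_compl, natGraph]

/-- `τ` rules out `R` as a reduction of `A` to the join built from any `f` extending `τ`. -/
def Diagonalizes (A : Set ℕ) (R : ℕ → List ℕ → Prop) (τ : List ℕ) : Prop :=
  ∃ k l, k ∉ A ∧ R k l ∧ ∀ i ∈ l, Forces τ i

section Diagonalization

variable {A B : Set ℕ} {R : ℕ → List ℕ → Prop} {f : ℕ → ℕ}

theorem not_diagonalizes_map_range
    (hR : ∀ k, k ∈ A ↔ ∃ l, R k l ∧ ∀ i ∈ l, i ∈ setJoin (natGraph f) (natGraph f)ᶜ) (n : ℕ) :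
    ¬ Diagonalizes A R ((List.range n).map f) := by
  rintro ⟨k, l, hk, hkl, hl⟩
  refine hk ((hR k).2 ⟨l, hkl, fun i hi => ?_⟩)
  exact (forces_map_range_iff (by simpa using (hl i hi).1)).1 (hl i hi)

theorem enumReducible_of_forall_not_diagonalizes (hRre : REPred fun x : ℕ × List ℕ => R x.1 x.2)
    (hR : ∀ k, k ∈ A ↔ ∃ l, R k l ∧ ∀ i ∈ l, i ∈ setJoin (natGraph f) (natGraph f)ᶜ)
    (hfB : ∀ n, f n ∈ B) {n : ℕ}
    (hn : ∀ τ, (List.range n).map f <+: τ → (∀ x ∈ τ, x ∈ B) → ¬ Diagonalizes A R τ) :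
    EnumReducible A B := by
  refine enumReducible_iff_exists_list.2
    ⟨fun k τ => (List.range n).map f <+: τ ∧ ∃ l, R k l ∧ ∀ i ∈ l, Forces τ i, ?_, fun k => ?_⟩
  · refine REPred.and (PrimrecRel.list_isPrefix.comp (Primrec.const _) .snd).rePred
      (REPred.exists_of_prod (REPred.and
        (hRre.comp (f := fun y : (ℕ × List ℕ) × List ℕ => (y.1.1, y.2))
          (Primrec.fst.comp Primrec.fst |>.pair Primrec.snd).to_comp) ?_))
    have h : PrimrecRel fun (i : ℕ) (y : (ℕ × List ℕ) × List ℕ) => Forces y.1.2 i :=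
      primrecRel_forces.comp (Primrec.snd.comp (Primrec.fst.comp .snd)) .fst
    exact (h.forall_mem_list.comp .snd .id).rePred
  constructor
  · intro hk
    obtain ⟨l, hkl, hlJ⟩ := (hR k).1 hk
    refine ⟨(List.range (n + l.sum + 1)).map f,
      ⟨map_range_prefix f (by omega), l, hkl, fun i hi => ?_⟩, by simp [hfB]⟩
    refine (forces_map_range_iff ?_).2 (hlJ i hi)
    have := List.le_sum_of_mem hi
    have := Nat.unpair_left_le (i / 2)
    omega
  · rintro ⟨τ, ⟨hpre, l, hkl, hl⟩, hτB⟩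
    by_contra hk
    exact hn τ hpre hτB ⟨k, l, hk, hkl, hl⟩

end Diagonalization

theorem enumReducible_of_forall_enumReducible_setJoin_compl {A B : Set ℕ} (hB : B.Nonempty)
    (H : ∀ C : Set ℕ, EnumReducible B (setJoin C Cᶜ) → EnumReducible A (setJoin C Cᶜ)) :
    EnumReducible A B := by
  classical
  obtain ⟨b₀, hb₀⟩ := hB
  obtain ⟨f, hfB, hfb, hgeneric⟩ := exists_generic_enumeration
    (b := fun s => if s ∈ B then s else b₀)
    (fun s => Diagonalizes A fun k l => (eval (ofNat Code s) (encode (k, l))).Dom)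
    (fun s => by split_ifs <;> assumption)
  have hrange : Set.range f = B := by
    refine Set.Subset.antisymm (Set.range_subset_iff.2 hfB) fun k hk => ?_
    obtain ⟨n, hn⟩ := hfb k
    exact ⟨n, by simpa [hk] using hn⟩
  obtain ⟨R, hRre, hR⟩ :=
    enumReducible_iff_exists_list.1 (H _ (enumReducible_setJoin_natGraph hrange))
  obtain ⟨c, hc⟩ := hRre.exists_code
  rw [← ofNat_encode c] at hc
  simp only [fun k l => hc (k, l)] at hR
  rcases hgeneric (encode c) with ⟨n, hn⟩ | ⟨n, hn⟩
  · exact (not_diagonalizes_map_range hR n hn).elim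
  · exact enumReducible_of_forall_not_diagonalizes (REPred.of_code _) hR hfB hn

/-- **Selman–Rozinas theorem**: `A ≤ₑ B` iff for every `C ⊆ ℕ`,
`B ≤ₑ C ⊕ Cᶜ` implies `A ≤ₑ C ⊕ Cᶜ`. -/
theorem selman_rozinas (A B : Set ℕ) :
    EnumReducible A B ↔
      ∀ C : Set ℕ, EnumReducible B (setJoin C Cᶜ) → EnumReducible A (setJoin C Cᶜ) := by
  refine ⟨fun hAB C hBC => hAB.trans hBC, fun H => ?_⟩
  rcases B.eq_empty_or_nonempty with rfl | hB
  · have hempty : REPred (· ∈ (∅ : Set ℕ)) :=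
      (Primrec.eq.comp (Primrec.const 0) (Primrec.const 1)).rePred.of_eq (by simp)
    have hjoin : REPred (· ∈ setJoin (∅ : Set ℕ) ∅ᶜ) :=
      (Primrec.eq.comp (Primrec.nat_mod.comp .id (Primrec.const 2)) (Primrec.const 0)).not.rePred
        |>.of_eq fun i => by rw [mem_setJoin_compl]; simp
    exact (H ∅ (enumReducible_of_rePred hempty _)).trans (enumReducible_of_rePred hjoin ∅)
  · exact enumReducible_of_forall_enumReducible_setJoin_compl hB H
end

section
/- Assume the Shore–Slaman Join Theorem for Turing degrees: for every n and all x, y ∈ ℕ^ℕ with y not ≤_T x^{(n)}, there is g ≥_T x with g^{(n+1)} ≡_T g ⊕ y ≡_T y ⊕ x^{(n+1)}. Then for all x, y, z ∈ ℕ^ℕ and all natural numbers n ≥ m: if (y ⊕ g)^{(m)} ≤_T (x ⊕ g)^{(n)} holds for all g ≥_T z, then y ≤_T (x ⊕ z)^{(n-m)}. -/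
/-!
If `y ≰_T (x ⊕ z)⁽ⁿ⁻ᵐ⁾`, the join theorem at level `n - m` over `x ⊕ z` gives `g ≥_T x ⊕ z` with
`g⁽ⁿ⁻ᵐ⁺¹⁾ ≤_T g ⊕ y`. Taking `m` more jumps and using the hypothesis at `g`,
`g⁽ⁿ⁺¹⁾ ≤_T (y ⊕ g)⁽ᵐ⁾ ≤_T (x ⊕ g)⁽ⁿ⁾ ≡_T g⁽ⁿ⁾`, contradicting the diagonal fact `w' ≰_T w`.
The other ingredient is monotonicity of the jump: a reduction `a ≤_T b` turns every `a`-program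
into a `b`-program by substituting for its oracle calls, and this substitution is primitive
recursive on indices.
-/

open scoped Classical

/-- Codes for oracle (partial) computations: `Nat.Partrec.Code` plus an `oracle` constructor. -/
inductive OCode : Type
  | zero : OCode
  | succ : OCode
  | left : OCode
  | right : OCode
  | oracle : OCode
  | pair : OCode → OCode → OCode
  | comp : OCode → OCode → OCode
  | prec : OCode → OCode → OCode
  | rfind' : OCode → OCode

/-- Evaluation of an oracle code relative to the (total) oracle `g`. -/
def OCode.eval (g : ℕ → ℕ) : OCode → ℕ →. ℕ
  | .zero => pure 0
  | .succ => Nat.succ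
  | .left => ↑fun n : ℕ => n.unpair.1
  | .right => ↑fun n : ℕ => n.unpair.2
  | .oracle => ↑fun n : ℕ => g n
  | .pair cf cg => fun n => Nat.pair <$> OCode.eval g cf n <*> OCode.eval g cg n
  | .comp cf cg => fun n => OCode.eval g cg n >>= OCode.eval g cf
  | .prec cf cg =>
    Nat.unpaired fun a n =>
      n.rec (OCode.eval g cf a) fun y IH => do
        let i ← IH
        OCode.eval g cg (Nat.pair a (Nat.pair y i))
  | .rfind' cf =>
    Nat.unpaired fun a m =>
      (Nat.rfind fun n => (fun m => m = 0) <$> OCode.eval g cf (Nat.pair a (n + m))).map (· + m)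

/-- A Gödel numbering of oracle codes. -/
def OCode.encode : OCode → ℕ
  | .zero => 0
  | .succ => 1
  | .left => 2
  | .right => 3
  | .oracle => 4
  | .pair a b => 4 * Nat.pair a.encode b.encode + 5
  | .comp a b => 4 * Nat.pair a.encode b.encode + 6
  | .prec a b => 4 * Nat.pair a.encode b.encode + 7
  | .rfind' a => 4 * Nat.pair a.encode a.encode + 8

/-- Turing reducibility between elements of Baire space. -/
def OTuringReducible (f g : ℕ → ℕ) : Prop :=
  ∃ c : OCode, ∀ n, OCode.eval g c n = Part.some (f n)

/-- Turing equivalence. -/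
def TuringEquiv (f g : ℕ → ℕ) : Prop :=
  OTuringReducible f g ∧ OTuringReducible g f

/-- The Turing jump of `g`, as an element of Cantor space: the halting problem relative to `g`. -/
noncomputable def jump (g : ℕ → ℕ) : ℕ → ℕ := fun e =>
  if ∃ c : OCode, c.encode = e ∧ ((OCode.eval g c) e).Dom then 1 else 0

/-- The `k`-th iterated Turing jump. -/
noncomputable def jumpIter (k : ℕ) (g : ℕ → ℕ) : ℕ → ℕ := jump^[k] g

/-- The Turing join (of elements of Baire space). -/
def join (f g : ℕ → ℕ) : ℕ → ℕ := fun n => if n % 2 = 0 then f (n / 2) else g (n / 2)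


universe u

-- `OCode.eval` produces `PFun`s, which `Part.bind_some` does not match syntactically.
@[simp]
theorem Part.some_bind_pfun {α β : Type u} (a : α) (f : α →. β) : Part.some a >>= f = f a :=
  Part.bind_some a f

namespace OCode

def subst : OCode → OCode → OCode
  | .zero, _ => .zero
  | .succ, _ => .succ
  | .left, _ => .left
  | .right, _ => .right
  | .oracle, d => d
  | .pair a b, d => .pair (a.subst d) (b.subst d)
  | .comp a b, d => .comp (a.subst d) (b.subst d)
  | .prec a b, d => .prec (a.subst d) (b.subst d)
  | .rfind' a, d => .rfind' (a.subst d)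

theorem subst_oracle (c : OCode) : c.subst .oracle = c := by
  induction c <;> simp_all [subst]

theorem eval_subst {g h : ℕ → ℕ} {d : OCode} (hd : ∀ n, eval h d n = Part.some (g n))
    (c : OCode) : eval h (c.subst d) = eval g c := by
  induction c with
  | oracle => funext n; simp [subst, eval, hd n]
  | _ => simp only [subst, eval, *] <;> rfl

def ofPartrecCode : Nat.Partrec.Code → OCode
  | .zero => .zero
  | .succ => .succ
  | .left => .left
  | .right => .right
  | .pair a b => .pair (ofPartrecCode a) (ofPartrecCode b)
  | .comp a b => .comp (ofPartrecCode a) (ofPartrecCode b)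
  | .prec a b => .prec (ofPartrecCode a) (ofPartrecCode b)
  | .rfind' a => .rfind' (ofPartrecCode a)

theorem eval_ofPartrecCode (g : ℕ → ℕ) (c : Nat.Partrec.Code) :
    eval g (ofPartrecCode c) = c.eval := by
  induction c with
  | _ => simp only [ofPartrecCode, eval, Nat.Partrec.Code.eval, *] <;> rfl

theorem exists_eval_eq_of_computable {f : ℕ → ℕ} (hf : Computable f) :
    ∃ c : OCode, ∀ g n, eval g c n = Part.some (f n) := by
  obtain ⟨c, hc⟩ := Nat.Partrec.Code.exists_code.1 (Partrec.nat_iff.1 hf)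
  exact ⟨ofPartrecCode c, fun g n => by rw [eval_ofPartrecCode, hc]; rfl⟩

def ofNatCode : ℕ → OCode
  | 0 => .zero
  | 1 => .succ
  | 2 => .left
  | 3 => .right
  | 4 => .oracle
  | n + 5 =>
    have : (n / 4).unpair.1 < n + 5 :=
      (Nat.unpair_left_le _).trans_lt ((Nat.div_le_self n 4).trans_lt (by omega))
    have : (n / 4).unpair.2 < n + 5 :=
      (Nat.unpair_right_le _).trans_lt ((Nat.div_le_self n 4).trans_lt (by omega))
    match n % 4 with
    | 0 => .pair (ofNatCode (n / 4).unpair.1) (ofNatCode (n / 4).unpair.2)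
    | 1 => .comp (ofNatCode (n / 4).unpair.1) (ofNatCode (n / 4).unpair.2)
    | 2 => .prec (ofNatCode (n / 4).unpair.1) (ofNatCode (n / 4).unpair.2)
    | _ => .rfind' (ofNatCode (n / 4).unpair.1)

@[simp]
theorem ofNatCode_encode (c : OCode) : ofNatCode c.encode = c := by
  induction c with
  | zero | succ | left | right | oracle => simp [encode, ofNatCode]
  | pair a b iha ihb =>
    rw [show (pair a b).encode = 4 * Nat.pair a.encode b.encode + 5 from rfl]
    simp [ofNatCode, iha, ihb]
  | comp a b iha ihb =>
    rw [show (comp a b).encode = (4 * Nat.pair a.encode b.encode + 1) + 5 from rfl]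
    simp [ofNatCode, Nat.mul_add_div, iha, ihb]
  | prec a b iha ihb =>
    rw [show (prec a b).encode = (4 * Nat.pair a.encode b.encode + 2) + 5 from rfl]
    simp [ofNatCode, Nat.mul_add_div, iha, ihb]
  | rfind' a iha =>
    rw [show (rfind' a).encode = (4 * Nat.pair a.encode a.encode + 3) + 5 from rfl]
    simp [ofNatCode, Nat.mul_add_div, iha]

def const : ℕ → OCode
  | 0 => .zero
  | e + 1 => .comp .succ (const e)

@[simp]
theorem eval_const (g : ℕ → ℕ) (e n : ℕ) : eval g (const e) n = Part.some e := by
  induction e with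
  | zero => rfl
  | succ e ih => simp [const, eval, ih]

end OCode

open OCode

namespace OTuringReducible

theorem refl (f : ℕ → ℕ) : OTuringReducible f f :=
  ⟨.oracle, fun _ => rfl⟩

theorem trans {f g h : ℕ → ℕ} (hfg : OTuringReducible f g) (hgh : OTuringReducible g h) :
    OTuringReducible f h := by
  obtain ⟨c, hc⟩ := hfg
  obtain ⟨d, hd⟩ := hgh
  exact ⟨c.subst d, fun n => by rw [eval_subst hd, hc]⟩

theorem comp_computable {f h F : ℕ → ℕ} (hf : OTuringReducible f h) (hF : Computable F) :
    OTuringReducible (fun n => f (F n)) h := by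
  obtain ⟨c, hc⟩ := hf
  obtain ⟨cF, hcF⟩ := exists_eval_eq_of_computable hF
  exact ⟨.comp c cF, fun n => by simp [eval, hcF h n, hc]⟩

theorem ite {u v h p : ℕ → ℕ} (hp : Computable p) (hu : OTuringReducible u h)
    (hv : OTuringReducible v h) :
    OTuringReducible (fun n => if p n = 0 then u n else v n) h := by
  obtain ⟨cu, hcu⟩ := hu
  obtain ⟨cv, hcv⟩ := hv
  obtain ⟨cp, hcp⟩ := exists_eval_eq_of_computable
    (Primrec₂.natPair.to_comp.comp .id (Primrec.nat_min.to_comp.comp hp (.const 1)))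
  -- `prec` on `⟨n, min (p n) 1⟩` runs `cu` on `n`, followed by at most one step of `cv`
  refine ⟨.comp (.prec cu (.comp cv .left)) cp, fun n => ?_⟩
  rcases hpn : p n with _ | k <;> simp [eval, hcp h n, hpn, Nat.unpaired, hcu, hcv]

end OTuringReducible

theorem join_left (f g : ℕ → ℕ) : OTuringReducible f (join f g) := by
  have h := (OTuringReducible.refl (join f g)).comp_computable
    (Primrec.nat_mul.comp (.const 2) .id).to_comp
  convert h using 2 with n
  simp [join]

theorem join_right (f g : ℕ → ℕ) : OTuringReducible g (join f g) := by
  have h := (OTuringReducible.refl (join f g)).comp_computable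
    (Primrec.succ.comp (Primrec.nat_mul.comp (.const 2) .id)).to_comp
  convert h using 2 with n
  simp [join, Nat.succ_div_of_not_dvd]

theorem join_le {f g h : ℕ → ℕ} (hf : OTuringReducible f h) (hg : OTuringReducible g h) :
    OTuringReducible (join f g) h := by
  have half : Computable fun n : ℕ => n / 2 := (Primrec.nat_div.comp .id (.const 2)).to_comp
  exact .ite (Primrec.nat_mod.comp .id (.const 2)).to_comp
    (hf.comp_computable half) (hg.comp_computable half)

-- Not every `e` is an index: `encode` misses `4 * pair a b + 8` for `a ≠ b`.
theorem jump_apply (g : ℕ → ℕ) (e : ℕ) :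
    jump g e = if (ofNatCode e).encode = e ∧ (eval g (ofNatCode e) e).Dom then 1 else 0 := by
  rw [jump]
  congr 1
  refine propext ⟨?_, fun ⟨he, hd⟩ => ⟨_, he, hd⟩⟩
  rintro ⟨c, rfl, hd⟩
  simpa using hd

theorem jump_encode (g : ℕ → ℕ) (c : OCode) :
    jump g c.encode = if (eval g c c.encode).Dom then 1 else 0 := by
  simp [jump_apply]

theorem jump_not_reducible (w : ℕ → ℕ) : ¬ OTuringReducible (jump w) w := by
  rintro ⟨c, hc⟩
  obtain ⟨cp, hcp⟩ := exists_eval_eq_of_computable (Primrec₂.natPair.comp .id (.const 0)).to_comp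
  set d : OCode := .comp (.rfind' (.comp c .left)) cp
  have hd : ∀ k, (eval w d k).Dom ↔ jump w k = 0 := fun k => by
    simp only [d, eval, hcp w k, id_eq, PFun.coe_val, Nat.unpair_pair, Part.some_bind_pfun, hc,
      Part.map_eq_map, Part.map_some, Part.bind_eq_bind, Part.bind_some, Nat.unpaired, add_zero,
      Part.map_Dom]
    exact Nat.rfind_dom.trans (by simp)
  have := jump_encode w d
  split_ifs at this with h
  · exact absurd ((hd _).1 h) (by omega)
  · exact h ((hd _).2 this)

namespace OCode

/-- The index of a program whose root constructor is the `r`-th of `pair`, `comp`, `prec`,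
`rfind'` (`r < 4`), given the indices `a` and `b` of its subprograms. -/
def encodeNode (r a b : ℕ) : ℕ := 4 * Nat.pair a (if r = 3 then a else b) + r + 5

theorem primrec_encodeNode {α : Type*} [Primcodable α] {r a b : α → ℕ} (hr : Primrec r)
    (ha : Primrec a) (hb : Primrec b) : Primrec fun x => encodeNode (r x) (a x) (b x) := by
  unfold encodeNode
  refine Primrec.nat_add.comp (Primrec.nat_add.comp (Primrec.nat_mul.comp (.const 4)
    (Primrec₂.natPair.comp ha ?_)) hr) (.const 5)
  exact .ite (Primrec.eq.comp hr (.const 3)) ha hb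

theorem encode_subst_ofNatCode_add_five (d : OCode) (k : ℕ) :
    ((ofNatCode (k + 5)).subst d).encode =
      encodeNode (k % 4) ((ofNatCode (k / 4).unpair.1).subst d).encode
        ((ofNatCode (k / 4).unpair.2).subst d).encode := by
  have : k % 4 < 4 := Nat.mod_lt k (by omega)
  interval_cases h : k % 4 <;> simp [ofNatCode, h, subst, encode, encodeNode]

theorem primrec_encode_subst_ofNatCode (d : OCode) :
    Primrec fun e => ((ofNatCode e).subst d).encode := by
  set f := fun e => ((ofNatCode e).subst d).encode
  let children : ℕ → List ℕ := fun e =>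
    if e < 5 then [] else [((e - 5) / 4).unpair.1, ((e - 5) / 4).unpair.2]
  let step : ℕ → List ℕ → ℕ := fun e l =>
    if e < 4 then e else if e = 4 then d.encode
    else encodeNode ((e - 5) % 4) (l.getD 0 0) (l.getD 1 0)
  have hchildren : Primrec children := by
    have hq : Primrec fun e : ℕ => ((e - 5) / 4).unpair :=
      Primrec.unpair.comp (Primrec.nat_div.comp (Primrec.nat_sub.comp .id (.const 5)) (.const 4))
    exact .ite (Primrec.nat_lt.comp .id (.const 5)) (.const [])
      (Primrec.list_cons.comp (Primrec.fst.comp hq)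
        (Primrec.list_cons.comp (Primrec.snd.comp hq) (.const [])))
  have hstep : Primrec₂ step := by
    refine .ite (Primrec.nat_lt.comp .fst (.const 4)) .fst
      (.ite (Primrec.eq.comp .fst (.const 4)) (.const _) ?_)
    exact primrec_encodeNode
      (Primrec.nat_mod.comp (Primrec.nat_sub.comp .fst (.const 5)) (.const 4))
      ((Primrec.list_getD 0).comp .snd (.const 0)) ((Primrec.list_getD 0).comp .snd (.const 1))
  refine Primrec.nat_omega_rec' f .id hchildren (Primrec.option_some.comp hstep).to₂ ?_ ?_
  · intro e e' he'
    simp only [children] at he'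
    split_ifs at he' with he
    · simp at he'
    · have := Nat.div_le_self (e - 5) 4
      have := Nat.unpair_left_le ((e - 5) / 4)
      have := Nat.unpair_right_le ((e - 5) / 4)
      simp only [List.mem_cons, List.not_mem_nil, or_false] at he'
      rcases he' with rfl | rfl <;> simp only [id] <;> omega
  · intro e
    rcases Nat.lt_or_ge e 5 with he | he
    · interval_cases e <;> simp [children, step, f, ofNatCode, subst, encode]
    · obtain ⟨k, rfl⟩ := Nat.exists_eq_add_of_le' he
      simp [children, step, f, encode_subst_ofNatCode_add_five]

theorem primrec_encode_const : Primrec fun e => (const e).encode := by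
  refine (Primrec.nat_rec₁ 0 (f := fun _ i => 4 * Nat.pair 1 i + 6) ?_).of_eq fun e => ?_
  · exact (Primrec.nat_add.comp (Primrec.nat_mul.comp (.const 4)
      (Primrec₂.natPair.comp (.const 1) .snd)) (.const 6)).to₂
  · induction e with
    | zero => rfl
    | succ e ih => simp only [const, encode, ← ih]

end OCode

theorem jump_mono {a b : ℕ → ℕ} (h : OTuringReducible a b) :
    OTuringReducible (jump a) (jump b) := by
  obtain ⟨d, hd⟩ := h
  -- `F` sends the index `e` of an `a`-program to that of a `b`-program running it on input `e`
  let F : ℕ → ℕ := fun e =>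
    if (ofNatCode e).encode = e then (comp ((ofNatCode e).subst d) (const e)).encode else e
  have hF : Computable F := by
    have hvalid : Primrec fun e => (ofNatCode e).encode :=
      (primrec_encode_subst_ofNatCode .oracle).of_eq fun e => by rw [subst_oracle]
    refine (Primrec.ite (Primrec.eq.comp hvalid .id) ?_ .id).to_comp
    exact Primrec.nat_add.comp (Primrec.nat_mul.comp (.const 4) (Primrec₂.natPair.comp
      (primrec_encode_subst_ofNatCode d) primrec_encode_const)) (.const 6)
  have hjump : jump a = fun e => jump b (F e) := by
    funext e
    by_cases he : (ofNatCode e).encode = e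
    · simp [F, he, jump_encode, jump_apply a e, eval, eval_subst hd]
    · simp [F, he, jump_apply]
  rw [hjump]
  exact (OTuringReducible.refl _).comp_computable hF

theorem jumpIter_succ (k : ℕ) (g : ℕ → ℕ) : jumpIter (k + 1) g = jump (jumpIter k g) :=
  Function.iterate_succ_apply' jump k g

theorem jumpIter_jumpIter (m k : ℕ) (g : ℕ → ℕ) :
    jumpIter m (jumpIter k g) = jumpIter (m + k) g :=
  (Function.iterate_add_apply jump m k g).symm

theorem jumpIter_mono (k : ℕ) {a b : ℕ → ℕ} (h : OTuringReducible a b) :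
    OTuringReducible (jumpIter k a) (jumpIter k b) := by
  induction k with
  | zero => exact h
  | succ k ih => simpa only [jumpIter_succ] using jump_mono ih

/-- **The Cancellation Lemma from the Shore–Slaman Join Theorem**: assuming the
Shore–Slaman Join Theorem for Turing degrees, if `(y ⊕ g)⁽ᵐ⁾ ≤_T (x ⊕ g)⁽ⁿ⁾` for
every `g ≥_T z` then `y ≤_T (x ⊕ z)⁽ⁿ⁻ᵐ⁾`. -/
theorem cancellation_of_shore_slaman
    (hSS : ∀ (n : ℕ) (x y : ℕ → ℕ), ¬ OTuringReducible y (jumpIter n x) →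
      ∃ g : ℕ → ℕ, OTuringReducible x g ∧
        TuringEquiv (jumpIter (n + 1) g) (join g y) ∧
        TuringEquiv (join g y) (join y (jumpIter (n + 1) x)))
    (x y z : ℕ → ℕ) (m n : ℕ) (hmn : m ≤ n)
    (H : ∀ g : ℕ → ℕ, OTuringReducible z g →
      OTuringReducible (jumpIter m (join y g)) (jumpIter n (join x g))) :
    OTuringReducible y (jumpIter (n - m) (join x z)) := by
  by_contra hy
  obtain ⟨g, hxzg, ⟨hjoin, -⟩, -⟩ := hSS (n - m) (join x z) y hy
  have hxg : OTuringReducible x g := (join_left x z).trans hxzg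
  have hzg : OTuringReducible z g := (join_right x z).trans hxzg
  have hjump : OTuringReducible (jumpIter (n + 1) g) (jumpIter m (join y g)) := by
    have := jumpIter_mono m (hjoin.trans (join_le (join_right y g) (join_left y g)))
    rwa [jumpIter_jumpIter, show m + (n - m + 1) = n + 1 by omega] at this
  have hbase : OTuringReducible (jumpIter n (join x g)) (jumpIter n g) :=
    jumpIter_mono n (join_le hxg (.refl g))
  refine jump_not_reducible (jumpIter n g) ?_
  rw [← jumpIter_succ]
  exact (hjump.trans (H g hzg)).trans hbase
end

section
/- Let X, Y be Polish spaces, A ⊆ X, k < ω, and let f : A → Y be Σ⁰_ξ-measurable. If f is decomposable into countably many Σ⁰_{k+1}-measurable functions (on arbitrary pieces), then f is decomposable into countably many Σ⁰_{k+1}-measurable functions on pieces that are Π⁰_{max(ξ, k+1)} subsets of A, hence Δ⁰_{max(ξ,k+1)+1} subsets of A. -/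
/-- The transfinite additive Borel classes of a topological space: for `ξ ≤ 1`,
`Σ⁰_ξ` is the class of open sets; for `ξ > 1`, `Σ⁰_ξ` consists of countable
unions `⋃_n (A_n)ᶜ` with each `A_n ∈ Σ⁰_{ζ_n}` for some `ζ_n < ξ`. -/
def SigP (X : Type*) [TopologicalSpace X] (ξ : Ordinal.{0}) : Set (Set X) :=
  if ξ ≤ 1 then {S | IsOpen S}
  else {S | ∃ A : ℕ → Set X,
    (∀ n : ℕ, ∃ ζ : Ordinal.{0}, ∃ _ : ζ < ξ, A n ∈ SigP X ζ) ∧ S = ⋃ n, (A n)ᶜ}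
termination_by ξ
decreasing_by assumption

section Lemmas
variable {X : Type*} [TopologicalSpace X] {ξ ζ η : Ordinal.{0}}

lemma sigP_eq_of_le_one (h : ξ ≤ 1) : SigP X ξ = {S | IsOpen S} := by
  rw [SigP]; simp [h]

lemma sigP_eq_of_one_lt (h : 1 < ξ) :
    SigP X ξ = {S | ∃ A : ℕ → Set X,
      (∀ n : ℕ, ∃ ζ : Ordinal.{0}, ∃ _ : ζ < ξ, A n ∈ SigP X ζ) ∧ S = ⋃ n, (A n)ᶜ} := by
  rw [SigP]; simp [not_le.mpr h]

lemma IsOpen.mem_sigP [PolishSpace X] {S : Set X} (hS : IsOpen S) : S ∈ SigP X ξ := by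
  rcases le_or_gt ξ 1 with h | h
  · rw [sigP_eq_of_le_one h]; exact hS
  · letI := TopologicalSpace.upgradeIsCompletelyMetrizable X
    obtain ⟨g, hgopen, hgeq⟩ := (hS.isClosed_compl).isGδ.eq_iInter_nat
    rw [sigP_eq_of_one_lt h]
    refine ⟨g, fun n => ⟨0, lt_trans zero_lt_one h, ?_⟩, ?_⟩
    · rw [sigP_eq_of_le_one zero_le_one]; exact hgopen n
    · rw [← Set.compl_iInter, ← hgeq, compl_compl]

lemma sigP_empty_mem [PolishSpace X] : (∅ : Set X) ∈ SigP X ξ := isOpen_empty.mem_sigP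

lemma sigP_mono [PolishSpace X] (h : ζ ≤ η) : SigP X ζ ⊆ SigP X η := by
  rcases le_or_gt ζ 1 with hζ | hζ
  · intro S hS; rw [sigP_eq_of_le_one hζ] at hS; exact hS.mem_sigP
  · intro S hS
    rw [sigP_eq_of_one_lt hζ] at hS
    rw [sigP_eq_of_one_lt (lt_of_lt_of_le hζ h)]
    obtain ⟨B, hB, rfl⟩ := hS
    exact ⟨B, fun n => (hB n).imp (fun θ ⟨hθ, hm⟩ => ⟨hθ.trans_le h, hm⟩), rfl⟩

lemma sigP_iUnion {S : ℕ → Set X} (hS : ∀ n, S n ∈ SigP X ξ) :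
    (⋃ n, S n) ∈ SigP X ξ := by
  rcases le_or_gt ξ 1 with h | h
  · rw [sigP_eq_of_le_one h] at *
    exact isOpen_iUnion fun n => hS n
  · have hS' := fun n => by have := hS n; rwa [sigP_eq_of_one_lt h] at this
    choose B hB hBeq using hS'
    rw [sigP_eq_of_one_lt h]
    refine ⟨fun j => B j.unpair.1 j.unpair.2, fun j => hB _ _, ?_⟩
    ext x
    simp only [Set.mem_iUnion]
    constructor
    · rintro ⟨n, hx⟩
      rw [hBeq n] at hx
      obtain ⟨m, hm⟩ := Set.mem_iUnion.mp hx
      exact ⟨Nat.pair n m, by simpa [Nat.unpair_pair] using hm⟩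
    · rintro ⟨j, hj⟩
      refine ⟨j.unpair.1, ?_⟩
      rw [hBeq]
      exact Set.mem_iUnion.mpr ⟨j.unpair.2, hj⟩

lemma sigP_union {S T : Set X} (hS : S ∈ SigP X ξ) (hT : T ∈ SigP X ξ) :
    S ∪ T ∈ SigP X ξ := by
  have : S ∪ T = ⋃ n : ℕ, (if n = 0 then S else T) := by
    ext x; simp only [Set.mem_union, Set.mem_iUnion]
    constructor
    · rintro (h | h); exacts [⟨0, by simpa⟩, ⟨1, by simpa⟩]
    · rintro ⟨n, hn⟩; by_cases hn0 : n = 0 <;> simp [hn0] at hn <;> [left; right] <;> exact hn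
  rw [this]
  exact sigP_iUnion fun n => by by_cases hn0 : n = 0 <;> simp [hn0, hS, hT]

lemma sigP_inter [PolishSpace X] {S T : Set X} (hS : S ∈ SigP X ξ) (hT : T ∈ SigP X ξ) :
    S ∩ T ∈ SigP X ξ := by
  rcases le_or_gt ξ 1 with h | h
  · rw [sigP_eq_of_le_one h] at *; exact hS.inter hT
  · rw [sigP_eq_of_one_lt h] at hS hT ⊢
    obtain ⟨B, hB, rfl⟩ := hS
    obtain ⟨D, hD, rfl⟩ := hT
    refine ⟨fun j => B j.unpair.1 ∪ D j.unpair.2, fun j => ?_, ?_⟩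
    · obtain ⟨θ₁, hθ₁, hm₁⟩ := hB j.unpair.1
      obtain ⟨θ₂, hθ₂, hm₂⟩ := hD j.unpair.2
      refine ⟨max θ₁ θ₂, max_lt hθ₁ hθ₂, sigP_union (sigP_mono (le_max_left _ _) hm₁)
        (sigP_mono (le_max_right _ _) hm₂)⟩
    · ext x
      simp only [Set.mem_inter_iff, Set.mem_iUnion, Set.mem_compl_iff, Set.mem_union,
        not_or]
      constructor
      · rintro ⟨⟨n, hn⟩, ⟨m, hm⟩⟩
        exact ⟨Nat.pair n m, by simpa [Nat.unpair_pair] using ⟨hn, hm⟩⟩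
      · rintro ⟨j, hj1, hj2⟩
        exact ⟨⟨j.unpair.1, hj1⟩, ⟨j.unpair.2, hj2⟩⟩

lemma sigP_compl_mem (h1 : 1 < ξ) (hζ : ζ < ξ) {S : Set X} (hS : S ∈ SigP X ζ) :
    Sᶜ ∈ SigP X ξ := by
  rw [sigP_eq_of_one_lt h1]
  exact ⟨fun _ => S, fun _ => ⟨ζ, hζ, hS⟩, by rw [Set.iUnion_const]⟩

end Lemmas

/-- If `f : A → Y` is `Σ⁰_ξ`-measurable and decomposable into countably many
`Σ⁰_{k+1}`-measurable functions on arbitrary pieces, then it is so decomposable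
on pieces that are `Π⁰_{max(ξ, k+1)}` subsets of `A` (hence `Δ⁰_{max(ξ,k+1)+1}`). -/
theorem dec_pieces_complexity_bound
    {X Y : Type} [TopologicalSpace X] [PolishSpace X] [TopologicalSpace Y] [PolishSpace Y]
    (A : Set X) (k : ℕ) (ξ : Ordinal.{0}) (hξ : 1 ≤ ξ) (f : X → Y)
    (hmeas : ∀ U : Set Y, IsOpen U → ∃ S ∈ SigP X ξ, A ∩ f ⁻¹' U = S ∩ A)
    (hdec : ∃ C : ℕ → Set X, A ⊆ (⋃ i, C i) ∧
      ∀ i, ∀ U : Set Y, IsOpen U →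
        ∃ S ∈ SigP X ((k : Ordinal) + 1), (A ∩ C i) ∩ f ⁻¹' U = S ∩ (A ∩ C i)) :
    ∃ C : ℕ → Set X, (∀ i, C i ⊆ A) ∧ A ⊆ (⋃ i, C i) ∧
      ∀ i, (∃ T : Set X, Tᶜ ∈ SigP X (max ξ ((k : Ordinal) + 1)) ∧ C i = T ∩ A) ∧
        ∀ U : Set Y, IsOpen U →
          ∃ S ∈ SigP X ((k : Ordinal) + 1), C i ∩ f ⁻¹' U = S ∩ C i := by
  classical
  rcases le_or_gt ξ ((k : Ordinal) + 1) with hcase | hcase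
  · -- easy case: f itself is Σ⁰_{k+1}-measurable on A
    refine ⟨fun _ => A, fun _ => subset_rfl, Set.subset_iUnion (fun _ => A) 0, fun i => ⟨?_, ?_⟩⟩
    · exact ⟨Set.univ, by rw [Set.compl_univ]; exact sigP_empty_mem, (Set.univ_inter A).symm⟩
    · intro U hU
      obtain ⟨S, hS, hSeq⟩ := hmeas U hU
      exact ⟨S, sigP_mono hcase hS, hSeq⟩
  · -- hard case: ξ > k + 1
    have h1k : (1 : Ordinal) ≤ (k : Ordinal) + 1 := by
      simpa using add_le_add_right (Ordinal.zero_le (k : Ordinal)) 1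
    have h1ξ : (1 : Ordinal) < ξ := lt_of_le_of_lt h1k hcase
    have hmax : max ξ ((k : Ordinal) + 1) = ξ := max_eq_left hcase.le
    rcases isEmpty_or_nonempty Y with hY | hY
    · -- Y empty, hence X empty, A = ∅
      have hX : IsEmpty X := ⟨fun x => (hY.false (f x)).elim⟩
      have hAe : A = ∅ := Set.eq_empty_of_isEmpty A
      refine ⟨fun _ => ∅, fun _ => by simp [hAe], by simp [hAe], fun i => ⟨?_, ?_⟩⟩
      · exact ⟨Set.univ, by rw [Set.compl_univ]; exact sigP_empty_mem, by simp [hAe]⟩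
      · intro U hU; exact ⟨∅, sigP_empty_mem, by simp⟩
    letI := TopologicalSpace.upgradeIsCompletelyMetrizable Y
    set y : ℕ → Y := TopologicalSpace.denseSeq Y with hy_def
    have hy : DenseRange y := TopologicalSpace.denseRange_denseSeq Y
    obtain ⟨C, hC, hCi⟩ := hdec
    set r : ℕ → ℝ := fun m => 1 / ((m : ℝ) + 1) with hr_def
    have hrpos : ∀ m, 0 < r m := fun m => by positivity
    choose S' hS'mem hS'eq using fun n m => hmeas (Metric.ball (y n) (r m)) Metric.isOpen_ball
    choose S hSmem hSeq using fun i n m =>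
      hCi i (Metric.ball (y n) (r m)) Metric.isOpen_ball
    set G : ℕ → Set X := fun i => ⋃ n, ⋃ m, ⋃ n', ⋃ m',
      if r m + r m' ≤ dist (y n) (y n') then S' n m ∩ S i n' m' else ∅ with hG_def
    set H : ℕ → Set X := fun i => ⋂ m, ⋃ n, S i n m with hH_def
    -- key fact: outside G i, codes S i locate f
    have hkey : ∀ i x n m, x ∈ A → x ∉ G i → x ∈ S i n m → dist (f x) (y n) ≤ r m := by
      intro i x n m hxA hxG hxS
      refine le_of_forall_pos_le_add fun ε hε => ?_
      obtain ⟨m', hm'⟩ := exists_nat_one_div_lt (show (0:ℝ) < ε / 2 by linarith)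
      have hrm' : r m' < ε / 2 := by simpa [hr_def] using hm'
      obtain ⟨n', hn'⟩ := hy.exists_dist_lt (f x) (hrpos m')
      have hxf : x ∈ A ∩ f ⁻¹' Metric.ball (y n') (r m') :=
        ⟨hxA, by simpa [Metric.mem_ball] using hn'⟩
      rw [hS'eq n' m'] at hxf
      have hnotle : ¬ (r m' + r m ≤ dist (y n') (y n)) := by
        intro hle
        exact hxG (Set.mem_iUnion.mpr ⟨n', Set.mem_iUnion.mpr ⟨m', Set.mem_iUnion.mpr ⟨n,
          Set.mem_iUnion.mpr ⟨m, by simp only [if_pos hle]; exact ⟨hxf.1, hxS⟩⟩⟩⟩⟩)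
      push_neg at hnotle
      calc dist (f x) (y n) ≤ dist (f x) (y n') + dist (y n') (y n) := dist_triangle _ _ _
        _ ≤ r m' + (r m' + r m) := by
            have := hn'; have := hnotle; linarith
        _ ≤ r m + ε := by linarith
    refine ⟨fun i => ((G i ∪ (H i)ᶜ)ᶜ) ∩ A, fun i => Set.inter_subset_right, ?_, fun i => ⟨?_, ?_⟩⟩
    · -- coverage
      intro x hxA
      obtain ⟨_, ⟨i, rfl⟩, hxC⟩ := hC hxA
      refine Set.mem_iUnion.mpr ⟨i, ⟨?_, hxA⟩⟩
      simp only [Set.mem_compl_iff, Set.mem_union, not_or, not_not]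
      constructor
      · -- x ∉ G i
        intro hxG
        simp only [hG_def, Set.mem_iUnion] at hxG
        obtain ⟨n, m, n', m', hx⟩ := hxG
        by_cases hle : r m + r m' ≤ dist (y n) (y n')
        · rw [if_pos hle] at hx
          have h1 : x ∈ A ∩ f ⁻¹' Metric.ball (y n) (r m) := by
            rw [hS'eq n m]; exact ⟨hx.1, hxA⟩
          have h2 : x ∈ (A ∩ C i) ∩ f ⁻¹' Metric.ball (y n') (r m') := by
            rw [hSeq i n' m']; exact ⟨hx.2, hxA, hxC⟩
          have d1 : dist (f x) (y n) < r m := by simpa [Metric.mem_ball] using h1.2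
          have d2 : dist (f x) (y n') < r m' := by simpa [Metric.mem_ball] using h2.2
          have : dist (y n) (y n') ≤ dist (f x) (y n) + dist (f x) (y n') :=
            dist_triangle_left _ _ _
          linarith
        · rw [if_neg hle] at hx; exact hx
      · -- x ∈ H i
        simp only [hH_def, Set.mem_iInter, Set.mem_iUnion]
        intro m
        obtain ⟨n, hn⟩ := hy.exists_dist_lt (f x) (hrpos m)
        have : x ∈ (A ∩ C i) ∩ f ⁻¹' Metric.ball (y n) (r m) :=
          ⟨⟨hxA, hxC⟩, by simpa [Metric.mem_ball] using hn⟩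
        rw [hSeq i n m] at this
        exact ⟨n, this.1⟩
    · -- complexity of the piece
      refine ⟨(G i ∪ (H i)ᶜ)ᶜ, ?_, rfl⟩
      rw [compl_compl, hmax]
      refine sigP_union ?_ ?_
      · exact sigP_iUnion fun n => sigP_iUnion fun m => sigP_iUnion fun n' =>
          sigP_iUnion fun m' => by
            split
            · exact sigP_inter (hS'mem n m) (sigP_mono hcase.le (hSmem i n' m'))
            · exact sigP_empty_mem
      · rw [hH_def, Set.compl_iInter]
        exact sigP_iUnion fun m =>
          sigP_compl_mem h1ξ hcase (sigP_iUnion fun n => hSmem i n m)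
    · -- measurability on the piece
      intro U hU
      refine ⟨⋃ n, ⋃ m, if Metric.ball (y n) (2 * r m) ⊆ U then S i n m else ∅,
        sigP_iUnion fun n => sigP_iUnion fun m => by
          split
          · exact hSmem i n m
          · exact sigP_empty_mem, ?_⟩
      ext x
      simp only [Set.mem_inter_iff, Set.mem_preimage, Set.mem_iUnion, Set.mem_compl_iff,
        Set.mem_union, not_or, not_not]
      constructor
      · rintro ⟨⟨⟨hxG, hxH⟩, hxA⟩, hxU⟩
        refine ⟨?_, ⟨hxG, hxH⟩, hxA⟩
        obtain ⟨ε, hεpos, hball⟩ := Metric.isOpen_iff.mp hU (f x) hxU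
        obtain ⟨m, hm⟩ := exists_nat_one_div_lt (show (0:ℝ) < ε / 4 by linarith)
        have hrm : r m < ε / 4 := by simpa [hr_def] using hm
        simp only [hH_def, Set.mem_iInter, Set.mem_iUnion] at hxH
        obtain ⟨n, hn⟩ := hxH m
        have hdist : dist (f x) (y n) ≤ r m := hkey i x n m hxA hxG hn
        have hsub : Metric.ball (y n) (2 * r m) ⊆ U := by
          intro z hz
          apply hball
          rw [Metric.mem_ball] at hz ⊢
          calc dist z (f x) ≤ dist z (y n) + dist (y n) (f x) := dist_triangle _ _ _
            _ < 2 * r m + r m := by rw [dist_comm (y n) (f x)]; linarith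
            _ < ε := by linarith
        exact ⟨n, m, by rw [if_pos hsub]; exact hn⟩
      · rintro ⟨⟨n, m, hx⟩, ⟨hxG, hxH⟩, hxA⟩
        refine ⟨⟨⟨hxG, hxH⟩, hxA⟩, ?_⟩
        by_cases hsub : Metric.ball (y n) (2 * r m) ⊆ U
        · rw [if_pos hsub] at hx
          have hdist : dist (f x) (y n) ≤ r m := hkey i x n m hxA hxG hx
          exact hsub (by rw [Metric.mem_ball]; have := hrpos m; linarith)
        · rw [if_neg hsub] at hx; exact hx.elim
end
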